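/- arXiv:1801.10210 — 3 statements merged into one kernel-verified Lean document; each statement's English description precedes it below -/
import Mathlib

section
/- Fix a ∈ ℝ^D and a nondegenerate simplex T ⊂ ℝ^D. Then the functions e_{a,n}(x) := ( Σ_{j=0}^D s_j(x) exp(a · x_j / n) )^n converge uniformly on T to exp(a · x) as n → ∞; moreover there exists a constant K such that sup_{x∈T} |e_{a,n}(x) − exp(a·x)| ≤ (K/n + O(1/n²)) · sup_{x∈T} exp(a·x). -/
/-!
Write `m = ∑ⱼ sⱼ cⱼ` with `cⱼ = a ⬝ xⱼ`, so that `a ⬝ y = m`. Factoring out `exp (m / n)`,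
`e_{a,n}(y) = exp m · Qⁿ` with `Q = ∑ⱼ sⱼ exp ((cⱼ - m) / n)`. The exponents `tⱼ = (cⱼ - m) / n`
have weighted mean `0` and size `O(1/n)`, so `1 ≤ Q ≤ 1 + O(1/n²)` by `1 + t ≤ exp t ≤ 1 + t + t²`;
hence `0 ≤ Qⁿ - 1 ≤ exp (O(1/n)) - 1 = O(1/n)`.
-/

open Finset

/-- Standard dot product on `ℝ^D`. -/
noncomputable def dotp {D : ℕ} (a y : Fin D → ℝ) : ℝ := ∑ i, a i * y i

/-- The degree-`n` Bernstein–Bézier approximant of `f` on the simplex with vertices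
`x₀, …, x_D`, expressed via the barycentric coordinate functions `s`:
`B_n(f; y) = ∑_{|k| = n} f(∑ⱼ (kⱼ/n) xⱼ) (n choose k₀,…,k_D) ∏ⱼ sⱼ(y)^{kⱼ}`. -/
noncomputable def bezier {D : ℕ} (x : Fin (D + 1) → (Fin D → ℝ))
    (s : (Fin D → ℝ) → Fin (D + 1) → ℝ) (f : (Fin D → ℝ) → ℝ) (n : ℕ)
    (y : Fin D → ℝ) : ℝ :=
  ∑ k ∈ Finset.piAntidiag (Finset.univ : Finset (Fin (D + 1))) n,
    f (∑ j, ((k j : ℝ) / n) • x j) *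
      ((Nat.multinomial Finset.univ k : ℝ) * ∏ j, (s y j) ^ (k j))

open Filter Topology

section WeightedExp

variable {ι : Type*} [Fintype ι] {s t : ι → ℝ}

lemma abs_sum_mul_le_of_abs_le {M : ℝ} (hs0 : ∀ j, 0 ≤ s j) (hs1 : ∑ j, s j = 1)
    (ht : ∀ j, |t j| ≤ M) : |∑ j, s j * t j| ≤ M := by
  have hmem := (convex_Icc (-M) M).sum_mem (t := univ) (fun j _ => hs0 j) hs1
    (fun j _ => abs_le.mp (ht j))
  simp only [smul_eq_mul] at hmem
  exact abs_le.mpr hmem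

lemma one_le_sum_mul_exp (hs0 : ∀ j, 0 ≤ s j) (hs1 : ∑ j, s j = 1)
    (hmean : ∑ j, s j * t j = 0) : 1 ≤ ∑ j, s j * Real.exp (t j) :=
  calc (1 : ℝ) = ∑ j, s j * (t j + 1) := by
        simp only [mul_add, mul_one, sum_add_distrib, hmean, hs1, zero_add]
    _ ≤ ∑ j, s j * Real.exp (t j) :=
        sum_le_sum fun j _ => mul_le_mul_of_nonneg_left (Real.add_one_le_exp _) (hs0 j)

lemma sum_mul_exp_le_one_add_sq {δ : ℝ} (hs0 : ∀ j, 0 ≤ s j) (hs1 : ∑ j, s j = 1)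
    (hmean : ∑ j, s j * t j = 0) (ht : ∀ j, |t j| ≤ δ) (hδ : δ ≤ 1) :
    ∑ j, s j * Real.exp (t j) ≤ 1 + δ ^ 2 := by
  have hexp : ∀ j, Real.exp (t j) ≤ 1 + t j + δ ^ 2 := fun j => by
    have hquad := (abs_le.mp (Real.abs_exp_sub_one_sub_id_le ((ht j).trans hδ))).2
    have hsq : t j ^ 2 ≤ δ ^ 2 := sq_le_sq' (abs_le.mp (ht j)).1 (abs_le.mp (ht j)).2
    linarith
  calc ∑ j, s j * Real.exp (t j) ≤ ∑ j, s j * (1 + t j + δ ^ 2) :=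
        sum_le_sum fun j _ => mul_le_mul_of_nonneg_left (hexp j) (hs0 j)
    _ = 1 + δ ^ 2 := by
        simp only [mul_add, mul_one, sum_add_distrib, ← sum_mul, hmean, hs1]
        ring

end WeightedExp

lemma pow_sub_one_le_of_le_one_add_div_sq {q b : ℝ} {n : ℕ} (hb : 0 ≤ b) (hbn : b ≤ n)
    (hq0 : 0 ≤ q) (hq : q ≤ 1 + b / n ^ 2) : q ^ n - 1 ≤ 2 * b / n := by
  have hpow : q ^ n ≤ Real.exp (b / n) :=
    calc q ^ n ≤ Real.exp (b / n ^ 2) ^ n :=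
          pow_le_pow_left₀ hq0 (hq.trans (by linarith [Real.add_one_le_exp (b / n ^ 2)])) n
      _ = Real.exp (b / n) := by
          rw [← Real.exp_nat_mul]
          rcases n.eq_zero_or_pos with rfl | hn
          · simp
          · field_simp
  have hbn' : |b / n| ≤ 1 := by
    rw [abs_of_nonneg (by positivity)]
    exact div_le_one_of_le₀ hbn (Nat.cast_nonneg n)
  have hexp := (abs_le.mp (Real.abs_exp_sub_one_le hbn')).2
  rw [abs_of_nonneg (by positivity)] at hexp
  linarith [mul_div_assoc 2 b (n : ℝ)]

lemma tendstoUniformlyOn_of_eventually_dist_le {ι α β : Type*} [PseudoMetricSpace β]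
    {F : ι → α → β} {f : α → β} {l : Filter ι} {S : Set α} {u : ι → ℝ}
    (hu : Tendsto u l (𝓝 0)) (h : ∀ᶠ i in l, ∀ y ∈ S, dist (F i y) (f y) ≤ u i) :
    TendstoUniformlyOn F f l S := by
  rw [Metric.tendstoUniformlyOn_iff]
  intro ε hε
  filter_upwards [h, hu.eventually (gt_mem_nhds hε)] with i hi hui y hy
  rw [dist_comm]
  exact (hi y hy).trans_lt hui

lemma dotp_sum_smul {ι : Type*} [Fintype ι] {D : ℕ} (a : Fin D → ℝ) (s : ι → ℝ)
    (x : ι → Fin D → ℝ) : dotp a (∑ j, s j • x j) = ∑ j, s j * dotp a (x j) := by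
  change a ⬝ᵥ _ = ∑ j, s j * (a ⬝ᵥ x j)
  simp only [dotProduct_sum, dotProduct_smul, smul_eq_mul]

lemma abs_sum_mul_exp_div_pow_sub_exp_le {ι : Type*} [Fintype ι] {s c : ι → ℝ} {M : ℝ} {n : ℕ}
    (hs0 : ∀ j, 0 ≤ s j) (hs1 : ∑ j, s j = 1) (hc : ∀ j, |c j| ≤ M)
    (hn : 0 < n) (hn₁ : 2 * M ≤ n) (hn₂ : 4 * M ^ 2 ≤ n) :
    |(∑ j, s j * Real.exp (c j / n)) ^ n - Real.exp (∑ j, s j * c j)| ≤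
      8 * M ^ 2 / n * Real.exp (∑ j, s j * c j) := by
  set m := ∑ j, s j * c j
  set t : ι → ℝ := fun j => (c j - m) / n
  set Q := ∑ j, s j * Real.exp (t j)
  have hn' : (0 : ℝ) < n := Nat.cast_pos.mpr hn
  have hmean : ∑ j, s j * t j = 0 := by
    simp only [t, mul_div_assoc', ← sum_div, mul_sub, sum_sub_distrib, ← sum_mul, hs1, one_mul]
    rw [sub_self, zero_div]
  have ht : ∀ j, |t j| ≤ 2 * M / n := fun j => by
    rw [abs_div, Nat.abs_cast]
    gcongr
    linarith [abs_sub (c j) m, hc j, abs_sum_mul_le_of_abs_le hs0 hs1 hc]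
  have hQ₁ : 1 ≤ Q := one_le_sum_mul_exp hs0 hs1 hmean
  have hQ₂ : Q ≤ 1 + 4 * M ^ 2 / n ^ 2 := by
    have := sum_mul_exp_le_one_add_sq hs0 hs1 hmean ht ((div_le_one hn').mpr hn₁)
    rwa [div_pow, mul_pow, show (2 : ℝ) ^ 2 = 4 by norm_num] at this
  have hfactor : (∑ j, s j * Real.exp (c j / n)) ^ n = Real.exp m * Q ^ n := by
    have : ∑ j, s j * Real.exp (c j / n) = Real.exp (m / n) * Q := by
      rw [mul_sum]
      refine sum_congr rfl fun j _ => ?_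
      rw [show c j / (n : ℝ) = m / n + t j by ring, Real.exp_add]
      ring
    rw [this, mul_pow, ← Real.exp_nat_mul, mul_div_cancel₀ _ hn'.ne']
  have hQpow : Q ^ n - 1 ≤ 2 * (4 * M ^ 2) / n :=
    pow_sub_one_le_of_le_one_add_div_sq (by positivity) hn₂ (by linarith) hQ₂
  rw [hfactor, ← mul_sub_one, abs_mul, Real.abs_exp,
    abs_of_nonneg (sub_nonneg.mpr (one_le_pow₀ hQ₁)), mul_comm]
  gcongr
  exact hQpow.trans_eq (by ring)

theorem stmt13_general {D : ℕ} (x : Fin (D + 1) → (Fin D → ℝ))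
    (T : Set (Fin D → ℝ))
    (s : (Fin D → ℝ) → Fin (D + 1) → ℝ)
    (hs_sum : ∀ y ∈ T, ∑ j, s y j = 1)
    (hs_nonneg : ∀ y ∈ T, ∀ j, 0 ≤ s y j)
    (hs_rep : ∀ y ∈ T, ∑ j, s y j • x j = y)
    (a : Fin D → ℝ) :
    TendstoUniformlyOn
      (fun (n : ℕ) (y : Fin D → ℝ) => (∑ j, s y j * Real.exp (dotp a (x j) / n)) ^ n)
      (fun y => Real.exp (dotp a y)) Filter.atTop T ∧
    ∃ (K C : ℝ) (N : ℕ), ∀ n : ℕ, N ≤ n → ∀ y ∈ T,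
      |(∑ j, s y j * Real.exp (dotp a (x j) / n)) ^ n - Real.exp (dotp a y)| ≤
        (K / n + C / (n : ℝ) ^ 2) * ⨆ z : T, Real.exp (dotp a z) := by
  set M := ∑ j, |dotp a (x j)|
  have hc : ∀ j, |dotp a (x j)| ≤ M := fun j =>
    single_le_sum (f := fun j => |dotp a (x j)|) (fun i _ => abs_nonneg _) (mem_univ j)
  have hdot : ∀ y ∈ T, dotp a y = ∑ j, s y j * dotp a (x j) := fun y hy => by
    conv_lhs => rw [← hs_rep y hy]
    exact dotp_sum_smul a (s y) x
  have hle_sup : ∀ y ∈ T, Real.exp (dotp a y) ≤ ⨆ z : T, Real.exp (dotp a z) := by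
    have hbdd : BddAbove (Set.range fun z : T => Real.exp (dotp a z)) := by
      refine ⟨Real.exp M, Set.forall_mem_range.mpr fun z => Real.exp_le_exp.mpr ?_⟩
      rw [hdot z z.2]
      exact (abs_le.mp (abs_sum_mul_le_of_abs_le (hs_nonneg z z.2) (hs_sum z z.2) hc)).2
    exact fun y hy => le_ciSup hbdd (⟨y, hy⟩ : T)
  set N := ⌈2 * M + 4 * M ^ 2⌉₊ + 1
  have hbound : ∀ n : ℕ, N ≤ n → ∀ y ∈ T,
      |(∑ j, s y j * Real.exp (dotp a (x j) / n)) ^ n - Real.exp (dotp a y)| ≤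
        8 * M ^ 2 / n * ⨆ z : T, Real.exp (dotp a z) := fun n hn y hy => by
    have hM : 0 ≤ M := sum_nonneg fun j _ => abs_nonneg _
    have hNn : 2 * M + 4 * M ^ 2 ≤ n :=
      (Nat.le_ceil _).trans (by exact_mod_cast (Nat.le_succ _).trans hn)
    refine (hdot y hy ▸ abs_sum_mul_exp_div_pow_sub_exp_le (hs_nonneg y hy) (hs_sum y hy) hc
      (by omega) (by nlinarith) (by nlinarith)).trans ?_
    gcongr
    exact hle_sup y hy
  refine ⟨tendstoUniformlyOn_of_eventually_dist_le ?_ ((eventually_ge_atTop N).mono fun n hn y hy =>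
    (Real.dist_eq _ _).trans_le (hbound n hn y hy)), 8 * M ^ 2, 0, N, ?_⟩
  · simpa only [div_mul_eq_mul_div] using tendsto_const_div_atTop_nhds_zero_nat _
  · simpa only [zero_div, add_zero] using hbound

/-- the functions `e_{a,n}(y) = (∑ⱼ sⱼ(y) exp (a ⬝ xⱼ / n))ⁿ` converge
uniformly on `T` to `exp (a ⬝ y)`, with error bound
`sup_{y∈T} |e_{a,n}(y) − exp (a⬝y)| ≤ (K/n + C/n²) ⨆_{z∈T} exp (a⬝z)` for large `n`. -/
theorem stmt13 {D : ℕ} (x : Fin (D + 1) → (Fin D → ℝ)) (hx : AffineIndependent ℝ x)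
    (T : Set (Fin D → ℝ)) (hT : T = convexHull ℝ (Set.range x))
    (s : (Fin D → ℝ) → Fin (D + 1) → ℝ)
    (hs_sum : ∀ y ∈ T, ∑ j, s y j = 1)
    (hs_nonneg : ∀ y ∈ T, ∀ j, 0 ≤ s y j)
    (hs_rep : ∀ y ∈ T, ∑ j, s y j • x j = y)
    (a : Fin D → ℝ) :
    TendstoUniformlyOn
      (fun (n : ℕ) (y : Fin D → ℝ) => (∑ j, s y j * Real.exp (dotp a (x j) / n)) ^ n)
      (fun y => Real.exp (dotp a y)) Filter.atTop T ∧
    ∃ (K C : ℝ) (N : ℕ), ∀ n : ℕ, N ≤ n → ∀ y ∈ T,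
      |(∑ j, s y j * Real.exp (dotp a (x j) / n)) ^ n - Real.exp (dotp a y)| ≤
        (K / n + C / (n : ℝ) ^ 2) * ⨆ z : T, Real.exp (dotp a z) :=
  stmt13_general x T s hs_sum hs_nonneg hs_rep a
end

section
/- For f(x) = exp(a · x) with fixed a ∈ ℝ^D, the Bernstein–Bézier approximants satisfy the relative error bound: there is a constant K with |B_n(f; x) − exp(a·x)| / exp(a·x) ≤ K/n + O(1/n²) uniformly in x ∈ T. -/
open Finset

open Real

/-!
Since `f = exp (a ⬝ ·)` turns the convex combinations `∑ⱼ (kⱼ/n) xⱼ` into products, the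
multinomial theorem gives `B_n(f; y) = (∑ⱼ sⱼ(y) e^{cⱼ/n})ⁿ` with `cⱼ = a ⬝ xⱼ`. Factoring out
`e^{m/n}`, where `m = ∑ⱼ sⱼ(y) cⱼ = a ⬝ y`, the ratio `B_n(f; y) / f(y)` is `ρⁿ` with
`ρ = ∑ⱼ sⱼ(y) e^{uⱼ}` and centred exponents `uⱼ = (cⱼ - m)/n = O(1/n)`. The linear terms of
`e^{uⱼ}` cancel, so `1 ≤ ρ ≤ 1 + O(1/n²)`, and hence `0 ≤ ρⁿ - 1 = O(1/n)`.
-/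

lemma dotp_sum {D m : ℕ} (a : Fin D → ℝ) (t : Fin m → ℝ) (x : Fin m → (Fin D → ℝ)) :
    dotp a (∑ j, t j • x j) = ∑ j, t j * dotp a (x j) := by
  simp only [dotp, Finset.sum_apply, Pi.smul_apply, smul_eq_mul, mul_sum]
  rw [sum_comm]
  exact Finset.sum_congr rfl fun j _ => Finset.sum_congr rfl fun i _ => by ring

lemma bezier_exp {D : ℕ} (x : Fin (D + 1) → (Fin D → ℝ))
    (s : (Fin D → ℝ) → Fin (D + 1) → ℝ) (a : Fin D → ℝ) (n : ℕ) (y : Fin D → ℝ) :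
    bezier x s (fun z => exp (dotp a z)) n y = (∑ j, s y j * exp (dotp a (x j) / n)) ^ n := by
  rw [sum_pow_eq_sum_piAntidiag, bezier]
  refine sum_congr rfl fun k _ => ?_
  have hexp : exp (∑ j, (k j : ℝ) / n * dotp a (x j)) = ∏ j, exp (dotp a (x j) / n) ^ k j := by
    rw [exp_sum]
    refine prod_congr rfl fun j _ => ?_
    rw [← exp_nat_mul]
    ring_nf
  rw [dotp_sum, hexp, mul_comm]
  simp_rw [mul_pow, prod_mul_distrib]
  ring

lemma exp_sub_one_le_mul_exp (t : ℝ) : exp t - 1 ≤ t * exp t := by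
  have h := mul_le_mul_of_nonneg_right (one_sub_le_exp_neg t) (exp_pos t).le
  rw [← exp_add, neg_add_cancel, exp_zero] at h
  linarith

lemma one_add_pow_sub_one_le {δ : ℝ} (hδ : -1 ≤ δ) (n : ℕ) :
    (1 + δ) ^ n - 1 ≤ n * δ * exp (n * δ) := by
  have hpow : (1 + δ) ^ n ≤ exp (n * δ) := by
    rw [exp_nat_mul]
    exact pow_le_pow_left₀ (by linarith) (by linarith [add_one_le_exp δ]) n
  linarith [exp_sub_one_le_mul_exp (n * δ)]

section WeightedMean

variable {ι : Type*} [Fintype ι] {w : ι → ℝ}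

lemma one_le_sum_mul_exp_s14 (hw0 : ∀ j, 0 ≤ w j) (hw1 : ∑ j, w j = 1) {u : ι → ℝ}
    (hu : ∑ j, w j * u j = 0) : 1 ≤ ∑ j, w j * exp (u j) :=
  calc 1 = ∑ j, w j * (u j + 1) := by simp only [mul_add, sum_add_distrib, hu, mul_one, hw1]; ring
    _ ≤ ∑ j, w j * exp (u j) :=
      sum_le_sum fun j _ => mul_le_mul_of_nonneg_left (add_one_le_exp _) (hw0 j)

lemma sum_mul_exp_le_one_add_sq_s14 (hw0 : ∀ j, 0 ≤ w j) (hw1 : ∑ j, w j = 1) {u : ι → ℝ}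
    (hu : ∑ j, w j * u j = 0) {ε : ℝ} (hε : ε ≤ 1) (hu_le : ∀ j, |u j| ≤ ε) :
    ∑ j, w j * exp (u j) ≤ 1 + ε ^ 2 :=
  calc ∑ j, w j * exp (u j) ≤ ∑ j, w j * (1 + u j + ε ^ 2) := by
        refine sum_le_sum fun j _ => mul_le_mul_of_nonneg_left ?_ (hw0 j)
        have hsq : u j ^ 2 ≤ ε ^ 2 := sq_le_sq' (abs_le.mp (hu_le j)).1 (abs_le.mp (hu_le j)).2
        linarith [(abs_le.mp (abs_exp_sub_one_sub_id_le ((hu_le j).trans hε))).2]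
    _ = 1 + ε ^ 2 := by
        simp only [mul_add, sum_add_distrib, hu, mul_one, hw1, ← sum_mul]; ring

lemma abs_sub_sum_mul_le (hw0 : ∀ j, 0 ≤ w j) (hw1 : ∑ j, w j = 1) (c : ι → ℝ) (j : ι) :
    |c j - ∑ i, w i * c i| ≤ 2 * ∑ i, |c i| := by
  have hc : |c j| ≤ ∑ i, |c i| := single_le_sum (fun i _ => abs_nonneg (c i)) (mem_univ j)
  have hmean : |∑ i, w i * c i| ≤ ∑ i, |c i| := by
    refine (abs_sum_le_sum_abs _ _).trans (sum_le_sum fun i _ => ?_)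
    have hwi : w i ≤ 1 := hw1 ▸ single_le_sum (fun k _ => hw0 k) (mem_univ i)
    rw [abs_mul, abs_of_nonneg (hw0 i)]
    exact mul_le_of_le_one_left (abs_nonneg _) hwi
  linarith [abs_sub (c j) (∑ i, w i * c i)]

lemma sum_mul_exp_div_pow (c : ι → ℝ) {n : ℕ} (hn : n ≠ 0) :
    (∑ j, w j * exp (c j / n)) ^ n =
      exp (∑ i, w i * c i) * (∑ j, w j * exp ((c j - ∑ i, w i * c i) / n)) ^ n := by
  set m := ∑ i, w i * c i
  have hsplit : ∀ j, w j * exp (c j / n) = exp (m / n) * (w j * exp ((c j - m) / n)) := by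
    intro j
    rw [mul_left_comm, ← exp_add]
    ring_nf
  simp_rw [hsplit, ← mul_sum, mul_pow, ← exp_nat_mul]
  field_simp

theorem abs_sum_mul_exp_div_pow_sub_div_le (hw0 : ∀ j, 0 ≤ w j) (hw1 : ∑ j, w j = 1)
    {c : ι → ℝ} {R : ℝ} (hR : ∀ j, |c j - ∑ i, w i * c i| ≤ R) {n : ℕ} (hn : 1 ≤ n)
    (hRn : R ≤ n) :
    |(∑ j, w j * exp (c j / n)) ^ n - exp (∑ i, w i * c i)| / exp (∑ i, w i * c i) ≤
      R ^ 2 * exp (R ^ 2) / n := by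
  set m := ∑ i, w i * c i
  set u : ι → ℝ := fun j => (c j - m) / n
  have hn0 : (0 : ℝ) < n := by exact_mod_cast hn
  have hu : ∑ j, w j * u j = 0 := by
    simp only [u, mul_div_assoc', ← sum_div, mul_sub, sum_sub_distrib, ← sum_mul, hw1, m]
    ring
  have hu_le : ∀ j, |u j| ≤ R / n := fun j => by
    simpa only [u, abs_div, Nat.abs_cast] using div_le_div_of_nonneg_right (hR j) hn0.le
  have hRn' : R / n ≤ 1 := (div_le_one hn0).mpr hRn
  set ρ := ∑ j, w j * exp (u j)
  have hρ1 : 1 ≤ ρ := one_le_sum_mul_exp_s14 hw0 hw1 hu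
  have hρ2 : ρ ≤ 1 + (R / n) ^ 2 := sum_mul_exp_le_one_add_sq_s14 hw0 hw1 hu hRn' hu_le
  have hratio : |exp m * ρ ^ n - exp m| / exp m = ρ ^ n - 1 := by
    rw [← mul_sub_one, abs_mul, abs_of_pos (exp_pos m),
      abs_of_nonneg (sub_nonneg.mpr (one_le_pow₀ hρ1)), mul_div_cancel_left₀ _ (exp_pos m).ne']
  have hnδ : (n : ℝ) * (R / n) ^ 2 = R ^ 2 / n := by field_simp
  rw [sum_mul_exp_div_pow c (by omega), hratio]
  calc ρ ^ n - 1 ≤ (1 + (R / n) ^ 2) ^ n - 1 := by gcongr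
    _ ≤ n * (R / n) ^ 2 * exp (n * (R / n) ^ 2) :=
        one_add_pow_sub_one_le (by linarith [sq_nonneg (R / n)]) n
    _ ≤ R ^ 2 / n * exp (R ^ 2) := by
        rw [hnδ]
        gcongr
        exact div_le_self (sq_nonneg R) (by exact_mod_cast hn)
    _ = R ^ 2 * exp (R ^ 2) / n := by ring

end WeightedMean

theorem stmt14_general {D : ℕ} (x : Fin (D + 1) → (Fin D → ℝ))
    (T : Set (Fin D → ℝ))
    (s : (Fin D → ℝ) → Fin (D + 1) → ℝ)
    (hs_sum : ∀ y ∈ T, ∑ j, s y j = 1)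
    (hs_nonneg : ∀ y ∈ T, ∀ j, 0 ≤ s y j)
    (hs_rep : ∀ y ∈ T, ∑ j, s y j • x j = y)
    (a : Fin D → ℝ) :
    ∃ (K C : ℝ) (N : ℕ), ∀ n : ℕ, N ≤ n → ∀ y ∈ T,
      |bezier x s (fun z => Real.exp (dotp a z)) n y - Real.exp (dotp a y)| /
          Real.exp (dotp a y) ≤ K / n + C / (n : ℝ) ^ 2 := by
  set R := 2 * ∑ j, |dotp a (x j)|
  refine ⟨R ^ 2 * exp (R ^ 2), 0, ⌈R⌉₊ + 1, fun n hn y hy => ?_⟩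
  have hmean : dotp a y = ∑ j, s y j * dotp a (x j) := by
    conv_lhs => rw [← hs_rep y hy]
    exact dotp_sum a (s y) x
  rw [bezier_exp, hmean, zero_div, add_zero]
  exact abs_sum_mul_exp_div_pow_sub_div_le (hs_nonneg y hy) (hs_sum y hy)
    (abs_sub_sum_mul_le (hs_nonneg y hy) (hs_sum y hy) _) (by omega)
    ((Nat.le_ceil R).trans (by exact_mod_cast Nat.le_of_succ_le hn))

/-- for `f(y) = exp (a ⬝ y)`, the Bernstein–Bézier approximants satisfy
the relative error bound `|B_n(f; y) − exp(a⬝y)| / exp(a⬝y) ≤ K/n + C/n²` uniformly on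
`T`, for large `n`. -/
theorem stmt14 {D : ℕ} (x : Fin (D + 1) → (Fin D → ℝ)) (hx : AffineIndependent ℝ x)
    (T : Set (Fin D → ℝ)) (hT : T = convexHull ℝ (Set.range x))
    (s : (Fin D → ℝ) → Fin (D + 1) → ℝ)
    (hs_sum : ∀ y ∈ T, ∑ j, s y j = 1)
    (hs_nonneg : ∀ y ∈ T, ∀ j, 0 ≤ s y j)
    (hs_rep : ∀ y ∈ T, ∑ j, s y j • x j = y)
    (a : Fin D → ℝ) :
    ∃ (K C : ℝ) (N : ℕ), ∀ n : ℕ, N ≤ n → ∀ y ∈ T,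
      |bezier x s (fun z => Real.exp (dotp a z)) n y - Real.exp (dotp a y)| /
          Real.exp (dotp a y) ≤ K / n + C / (n : ℝ) ^ 2 :=
  stmt14_general x T s hs_sum hs_nonneg hs_rep a
end

section
/- Main theorem: for every continuous function f : T → ℝ on a nondegenerate D-dimensional simplex T, lim_{n→∞} sup_{x∈T} |f(x) − B_n(f; x)| = 0; i.e., the Bernstein–Bézier polynomials of f converge uniformly to f on T. -/
open Finset

/-!
Write `p = s(y)` for the barycentric coordinates of `y ∈ T`. The multinomial weights
`(n choose k) pᵏ` form a probability distribution on `{|k| = n}` (multinomial theorem) under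
which `kⱼ/n` has mean `pⱼ` and variance `pⱼ(1 - pⱼ)/n`, so the Bézier nodes `∑ⱼ (kⱼ/n) xⱼ`
concentrate at `y`. With `δ` a modulus of uniform continuity of `f` for `ε`, bounding
`|f(y) - f(z)| ≤ ε + 2 sup|f| ‖y - z‖² / δ²` and averaging over the nodes gives
`|f(y) - B_n(f; y)| ≤ ε + 2 sup|f| ∑ⱼ ‖xⱼ‖² / (δ² n)`, uniformly in `y`.
-/

open Filter Topology

theorem Nat.succ_mul_multinomial_add_single {ι : Type*} [Fintype ι] [DecidableEq ι]
    (k : ι → ℕ) (j : ι) :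
    (k j + 1) * Nat.multinomial univ (k + Pi.single j 1) =
      (∑ i, k i + 1) * Nat.multinomial univ k := by
  have hj : j ∉ univ.erase j := notMem_erase j univ
  have hrest : ∀ i ∈ univ.erase j, (k + Pi.single j 1 : ι → ℕ) i = k i := fun i hi => by
    simp [Pi.single_eq_of_ne (ne_of_mem_erase hi)]
  rw [← insert_erase (mem_univ j), Nat.multinomial_insert hj, Nat.multinomial_insert hj,
    Nat.multinomial_congr hrest, sum_congr rfl hrest, sum_insert hj]
  simp only [Pi.add_apply, Pi.single_eq_same]
  rw [← mul_assoc, ← mul_assoc, add_right_comm, Nat.add_one_mul_choose_eq]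
  ring

theorem Finset.sum_piAntidiag_succ_eq_sum_add_single {ι M : Type*} [Fintype ι] [DecidableEq ι]
    [AddCommMonoid M] (j : ι) (n : ℕ) {F : (ι → ℕ) → M} (hF : ∀ k, k j = 0 → F k = 0) :
    ∑ k ∈ piAntidiag univ (n + 1), F k = ∑ k ∈ piAntidiag univ n, F (k + Pi.single j 1) := by
  have sum_add_single (k : ι → ℕ) : ∑ i, (k + Pi.single j 1 : ι → ℕ) i = ∑ i, k i + 1 := by
    simp [sum_add_distrib]
  rw [← sum_image (add_left_injective _).injOn]
  refine (sum_subset ?_ fun k hk hk' => hF k ?_).symm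
  · intro k
    simp only [mem_image, mem_piAntidiag]
    rintro ⟨k, ⟨hk, -⟩, rfl⟩
    exact ⟨by rw [← hk, sum_add_single], by simp⟩
  · by_contra hj
    have hk_eq : k - Pi.single j 1 + Pi.single j 1 = k := by
      ext i
      obtain rfl | hi := eq_or_ne i j
      · simp only [Pi.add_apply, Pi.sub_apply, Pi.single_eq_same]
        omega
      · simp [hi]
    refine hk' (mem_image.2 ⟨k - Pi.single j 1, ?_, hk_eq⟩)
    have hsum := sum_add_single (k - Pi.single j 1)
    rw [hk_eq, (mem_piAntidiag.1 hk).1] at hsum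
    exact mem_piAntidiag.2 ⟨(Nat.add_right_cancel hsum).symm, by simp⟩

section MultinomialWeight

variable {ι : Type*} [Fintype ι]

noncomputable def multinomialWeight (p : ι → ℝ) (k : ι → ℕ) : ℝ :=
  Nat.multinomial univ k * ∏ i, p i ^ k i

theorem multinomialWeight_nonneg {p : ι → ℝ} (hp : ∀ i, 0 ≤ p i) (k : ι → ℕ) :
    0 ≤ multinomialWeight p k :=
  mul_nonneg (Nat.cast_nonneg _) (prod_nonneg fun i _ => pow_nonneg (hp i) _)

variable [DecidableEq ι]

theorem sum_multinomialWeight {p : ι → ℝ} (hp : ∑ i, p i = 1) (n : ℕ) :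
    ∑ k ∈ piAntidiag univ n, multinomialWeight p k = 1 := by
  have h := sum_pow_eq_sum_piAntidiag univ p n
  rw [hp, one_pow] at h
  exact h.symm

theorem succ_mul_multinomialWeight_add_single (p : ι → ℝ) (k : ι → ℕ) (j : ι) :
    (k j + 1) * multinomialWeight p (k + Pi.single j 1) =
      (∑ i, k i + 1) * p j * multinomialWeight p k := by
  have hsingle : ∏ i, p i ^ (Pi.single j 1 : ι → ℕ) i = p j := by
    rw [Fintype.prod_eq_single j fun i hi => by simp [hi]]
    simp
  have hprod : ∏ i, p i ^ (k + Pi.single j 1 : ι → ℕ) i = p j * ∏ i, p i ^ k i := by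
    simp only [Pi.add_apply, pow_add, prod_mul_distrib, hsingle, mul_comm]
  have hmult := congrArg (Nat.cast (R := ℝ)) (Nat.succ_mul_multinomial_add_single k j)
  push_cast at hmult
  unfold multinomialWeight
  rw [hprod, ← mul_assoc, hmult]
  push_cast
  ring

-- Weighting by `k j` turns `n + 1` draws into one forced draw of `j` followed by `n` free ones;
-- both factorial moments below are read off from this.
theorem sum_apply_mul_multinomialWeight_mul_succ (p : ι → ℝ) (j : ι) (n : ℕ)
    (g : (ι → ℕ) → ℝ) :
    ∑ k ∈ piAntidiag univ (n + 1), k j * multinomialWeight p k * g k =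
      (n + 1) * p j * ∑ k ∈ piAntidiag univ n, multinomialWeight p k * g (k + Pi.single j 1) := by
  rw [sum_piAntidiag_succ_eq_sum_add_single j n fun k hk => by simp [hk], mul_sum]
  refine sum_congr rfl fun k hk => ?_
  have hw := succ_mul_multinomialWeight_add_single p k j
  rw [(mem_piAntidiag.1 hk).1] at hw
  simp only [Pi.add_apply, Pi.single_eq_same, Nat.cast_add, Nat.cast_one]
  rw [hw]
  ring

theorem sum_apply_mul_multinomialWeight {p : ι → ℝ} (hp : ∑ i, p i = 1) (j : ι) (n : ℕ) :
    ∑ k ∈ piAntidiag univ n, k j * multinomialWeight p k = n * p j := by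
  cases n with
  | zero => simp
  | succ n =>
    simpa [sum_multinomialWeight hp] using sum_apply_mul_multinomialWeight_mul_succ p j n 1

theorem sum_apply_mul_apply_sub_one_mul_multinomialWeight {p : ι → ℝ} (hp : ∑ i, p i = 1)
    (j : ι) (n : ℕ) :
    ∑ k ∈ piAntidiag univ n, k j * (k j - 1) * multinomialWeight p k = n * (n - 1) * p j ^ 2 := by
  cases n with
  | zero => simp
  | succ n =>
    have h := sum_apply_mul_multinomialWeight_mul_succ p j n fun k => (k j : ℝ) - 1
    simp only [Pi.add_apply, Pi.single_eq_same, Nat.cast_add, Nat.cast_one, add_sub_cancel_right,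
      mul_comm (multinomialWeight p _), sum_apply_mul_multinomialWeight hp] at h
    simp only [mul_right_comm _ _ (multinomialWeight p _), h]
    push_cast
    ring

theorem sum_multinomialWeight_mul_sq_div_sub {p : ι → ℝ} (hp : ∑ i, p i = 1) (j : ι) {n : ℕ}
    (hn : n ≠ 0) :
    ∑ k ∈ piAntidiag univ n, multinomialWeight p k * ((k j : ℝ) / n - p j) ^ 2 =
      p j * (1 - p j) / n := by
  have expand : ∀ k : ι → ℕ, multinomialWeight p k * ((k j : ℝ) / n - p j) ^ 2 =
      (k j * (k j - 1) * multinomialWeight p k) / n ^ 2 +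
        (1 / n ^ 2 - 2 * p j / n) * (k j * multinomialWeight p k) +
        p j ^ 2 * multinomialWeight p k := fun k => by
    field_simp
    ring
  simp only [expand, sum_add_distrib, ← sum_div, ← mul_sum, sum_multinomialWeight hp,
    sum_apply_mul_multinomialWeight hp, sum_apply_mul_apply_sub_one_mul_multinomialWeight hp]
  field_simp
  ring

theorem sum_multinomialWeight_mul_sum_sq_div_sub_le {p : ι → ℝ} (hp₀ : ∀ i, 0 ≤ p i)
    (hp₁ : ∑ i, p i = 1) {n : ℕ} (hn : n ≠ 0) :
    ∑ k ∈ piAntidiag univ n, multinomialWeight p k * ∑ j, ((k j : ℝ) / n - p j) ^ 2 ≤ 1 / n := by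
  simp only [mul_sum]
  rw [sum_comm]
  simp only [sum_multinomialWeight_mul_sq_div_sub hp₁ _ hn]
  calc ∑ j, p j * (1 - p j) / n ≤ ∑ j, p j / n := by
        gcongr with j
        exact mul_le_of_le_one_right (hp₀ j) (by linarith [hp₀ j])
    _ = 1 / n := by rw [← sum_div, hp₁]

end MultinomialWeight

theorem norm_sum_smul_sq_le {ι E : Type*} [Fintype ι] [SeminormedAddCommGroup E]
    [NormedSpace ℝ E] (c : ι → ℝ) (x : ι → E) :
    ‖∑ i, c i • x i‖ ^ 2 ≤ (∑ i, ‖x i‖ ^ 2) * ∑ i, c i ^ 2 := by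
  calc ‖∑ i, c i • x i‖ ^ 2 ≤ (∑ i, ‖x i‖ * |c i|) ^ 2 := by
        refine pow_le_pow_left₀ (norm_nonneg _) ((norm_sum_le _ _).trans_eq ?_) 2
        simp [norm_smul, mul_comm]
    _ ≤ (∑ i, ‖x i‖ ^ 2) * ∑ i, c i ^ 2 := by
        simpa only [sq_abs] using sum_mul_sq_le_sq_mul_sq univ (‖x ·‖) (|c ·|)

theorem dist_le_add_mul_dist_sq {α E : Type*} [PseudoMetricSpace α] [SeminormedAddCommGroup E]
    {S : Set α} {f : α → E} {M ε δ : ℝ} (hδ : 0 < δ) (hM : ∀ z ∈ S, ‖f z‖ ≤ M)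
    (hf : ∀ a ∈ S, ∀ b ∈ S, dist a b < δ → dist (f a) (f b) < ε) {a b : α} (ha : a ∈ S)
    (hb : b ∈ S) : dist (f a) (f b) ≤ ε + 2 * M / δ ^ 2 * dist a b ^ 2 := by
  have hM₀ : 0 ≤ M := (norm_nonneg _).trans (hM a ha)
  by_cases hab : dist a b < δ
  · have : 0 ≤ 2 * M / δ ^ 2 * dist a b ^ 2 := by positivity
    linarith [hf a ha b hb hab]
  · have hε : 0 < ε := by simpa using hf a ha a ha (by simpa using hδ)
    have hfar : 1 ≤ dist a b ^ 2 / δ ^ 2 := by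
      rw [one_le_div (by positivity)]
      exact pow_le_pow_left₀ hδ.le (not_lt.1 hab) 2
    calc dist (f a) (f b) ≤ ‖f a‖ + ‖f b‖ := dist_le_norm_add_norm _ _
      _ ≤ 2 * M * 1 := by linarith [hM a ha, hM b hb]
      _ ≤ 2 * M * (dist a b ^ 2 / δ ^ 2) := by gcongr
      _ = 2 * M / δ ^ 2 * dist a b ^ 2 := by ring
      _ ≤ ε + 2 * M / δ ^ 2 * dist a b ^ 2 := le_add_of_nonneg_left hε.le

theorem sum_div_smul_mem_convexHull {ι E : Type*} [Fintype ι] [DecidableEq ι] [AddCommGroup E] [Module ℝ E]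
    (x : ι → E) {n : ℕ} (hn : n ≠ 0) {k : ι → ℕ} (hk : k ∈ piAntidiag univ n) :
    ∑ j, ((k j : ℝ) / n) • x j ∈ convexHull ℝ (Set.range x) := by
  refine mem_convexHull_of_exists_fintype _ x (fun j => by positivity) ?_ Set.mem_range_self rfl
  rw [← sum_div, ← Nat.cast_sum, (mem_piAntidiag.1 hk).1, div_self (Nat.cast_ne_zero.2 hn)]

theorem bezier_eq_sum_multinomialWeight {D : ℕ} (x : Fin (D + 1) → (Fin D → ℝ))
    (s : (Fin D → ℝ) → Fin (D + 1) → ℝ) (f : (Fin D → ℝ) → ℝ) (n : ℕ) (y : Fin D → ℝ) :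
    bezier x s f n y =
      ∑ k ∈ piAntidiag univ n, multinomialWeight (s y) k * f (∑ j, ((k j : ℝ) / n) • x j) :=
  sum_congr rfl fun _ _ => mul_comm _ _

theorem abs_sub_bezier_le {D : ℕ} (x : Fin (D + 1) → (Fin D → ℝ))
    (s : (Fin D → ℝ) → Fin (D + 1) → ℝ) (f : (Fin D → ℝ) → ℝ) {M ε δ : ℝ} (hδ : 0 < δ)
    (hM : ∀ z ∈ convexHull ℝ (Set.range x), ‖f z‖ ≤ M)
    (hf : ∀ a ∈ convexHull ℝ (Set.range x), ∀ b ∈ convexHull ℝ (Set.range x),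
      dist a b < δ → dist (f a) (f b) < ε)
    {n : ℕ} (hn : n ≠ 0) {y : Fin D → ℝ} (hs₀ : ∀ j, 0 ≤ s y j) (hs₁ : ∑ j, s y j = 1)
    (hy : ∑ j, s y j • x j = y) :
    |f y - bezier x s f n y| ≤ ε + 2 * M / δ ^ 2 * (∑ j, ‖x j‖ ^ 2) / n := by
  set p := s y
  set C := ∑ j, ‖x j‖ ^ 2
  set node : (Fin (D + 1) → ℕ) → Fin D → ℝ := fun k => ∑ j, ((k j : ℝ) / n) • x j
  have hyT : y ∈ convexHull ℝ (Set.range x) :=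
    mem_convexHull_of_exists_fintype p x hs₀ hs₁ Set.mem_range_self hy
  have hM₀ : 0 ≤ M := (norm_nonneg _).trans (hM y hyT)
  have hnode : ∀ k ∈ piAntidiag univ n, |f y - f (node k)| ≤
      ε + 2 * M / δ ^ 2 * (C * ∑ j, ((k j : ℝ) / n - p j) ^ 2) := by
    intro k hk
    have hdist : dist y (node k) ^ 2 ≤ C * ∑ j, ((k j : ℝ) / n - p j) ^ 2 := by
      have hsub : node k - ∑ j, p j • x j = ∑ j, ((k j : ℝ) / n - p j) • x j := by
        simp only [node, ← sum_sub_distrib, sub_smul]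
      rw [dist_comm, dist_eq_norm, ← hy, hsub]
      exact norm_sum_smul_sq_le _ x
    calc |f y - f (node k)| ≤ ε + 2 * M / δ ^ 2 * dist y (node k) ^ 2 :=
          dist_le_add_mul_dist_sq hδ hM hf hyT (sum_div_smul_mem_convexHull x hn hk)
      _ ≤ _ := by gcongr
  calc |f y - bezier x s f n y|
      = |∑ k ∈ piAntidiag univ n, multinomialWeight p k * (f y - f (node k))| := by
        rw [bezier_eq_sum_multinomialWeight]
        simp only [mul_sub, sum_sub_distrib, ← sum_mul, sum_multinomialWeight hs₁, one_mul]
        rfl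
    _ ≤ ∑ k ∈ piAntidiag univ n, multinomialWeight p k *
          (ε + 2 * M / δ ^ 2 * (C * ∑ j, ((k j : ℝ) / n - p j) ^ 2)) := by
        refine (abs_sum_le_sum_abs _ _).trans (sum_le_sum fun k hk => ?_)
        rw [abs_mul, abs_of_nonneg (multinomialWeight_nonneg hs₀ k)]
        exact mul_le_mul_of_nonneg_left (hnode k hk) (multinomialWeight_nonneg hs₀ k)
    _ = ∑ k ∈ piAntidiag univ n, (ε * multinomialWeight p k +
          2 * M / δ ^ 2 * C * (multinomialWeight p k * ∑ j, ((k j : ℝ) / n - p j) ^ 2)) :=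
        sum_congr rfl fun k _ => by ring
    _ = ε + 2 * M / δ ^ 2 * C * ∑ k ∈ piAntidiag univ n,
          multinomialWeight p k * ∑ j, ((k j : ℝ) / n - p j) ^ 2 := by
        rw [sum_add_distrib, ← mul_sum, ← mul_sum, sum_multinomialWeight hs₁, mul_one]
    _ ≤ ε + 2 * M / δ ^ 2 * C * (1 / n) := by
        gcongr
        exact sum_multinomialWeight_mul_sum_sq_div_sub_le hs₀ hs₁ hn
    _ = ε + 2 * M / δ ^ 2 * C / n := by ring

theorem stmt16_general {D : ℕ} (x : Fin (D + 1) → (Fin D → ℝ))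
    (T : Set (Fin D → ℝ)) (hT : T = convexHull ℝ (Set.range x))
    (s : (Fin D → ℝ) → Fin (D + 1) → ℝ)
    (hs_sum : ∀ y ∈ T, ∑ j, s y j = 1)
    (hs_nonneg : ∀ y ∈ T, ∀ j, 0 ≤ s y j)
    (hs_rep : ∀ y ∈ T, ∑ j, s y j • x j = y)
    (f : (Fin D → ℝ) → ℝ) (hf : ContinuousOn f T) :
    TendstoUniformlyOn (fun n => bezier x s f n) f Filter.atTop T := by
  subst hT
  have hT : IsCompact (convexHull ℝ (Set.range x)) := (Set.finite_range x).isCompact_convexHull ℝ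
  obtain ⟨M, hM⟩ := hT.exists_bound_of_continuousOn hf
  rw [Metric.tendstoUniformlyOn_iff]
  intro ε hε
  obtain ⟨δ, hδ, hfδ⟩ := Metric.uniformContinuousOn_iff.1
    (hT.uniformContinuousOn_of_continuous hf) (ε / 2) (half_pos hε)
  have hrate : Tendsto (fun n : ℕ => 2 * M / δ ^ 2 * (∑ j, ‖x j‖ ^ 2) / n) atTop (𝓝 0) :=
    tendsto_const_div_atTop_nhds_zero_nat _
  filter_upwards [hrate.eventually_lt_const (half_pos hε), eventually_ne_atTop 0]
    with n hn hn₀ y hy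
  rw [Real.dist_eq]
  calc |f y - bezier x s f n y| ≤ ε / 2 + 2 * M / δ ^ 2 * (∑ j, ‖x j‖ ^ 2) / n :=
        abs_sub_bezier_le x s f hδ hM hfδ hn₀ (hs_nonneg y hy) (hs_sum y hy) (hs_rep y hy)
    _ < ε := by linarith

/-- main theorem: for every continuous `f : T → ℝ` on a nondegenerate
`D`-simplex `T`, the Bernstein–Bézier polynomials `B_n(f; ·)` converge uniformly to `f`
on `T`: `lim_{n→∞} sup_{y∈T} |f(y) − B_n(f; y)| = 0`. -/
theorem stmt16 {D : ℕ} (x : Fin (D + 1) → (Fin D → ℝ)) (hx : AffineIndependent ℝ x)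
    (T : Set (Fin D → ℝ)) (hT : T = convexHull ℝ (Set.range x))
    (s : (Fin D → ℝ) → Fin (D + 1) → ℝ)
    (hs_cont : ContinuousOn s T)
    (hs_sum : ∀ y ∈ T, ∑ j, s y j = 1)
    (hs_nonneg : ∀ y ∈ T, ∀ j, 0 ≤ s y j)
    (hs_rep : ∀ y ∈ T, ∑ j, s y j • x j = y)
    (f : (Fin D → ℝ) → ℝ) (hf : ContinuousOn f T) :
    TendstoUniformlyOn (fun n => bezier x s f n) f Filter.atTop T :=
  stmt16_general x T hT s hs_sum hs_nonneg hs_rep f hf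
end
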